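/- arXiv:1809.06298 — 2 statements merged into one kernel-verified Lean document; each statement's English description precedes it below -/
import Mathlib

section
/- Let A be an n×n real matrix with nonnegative off-diagonal entries that is irreducible, and let τ > 0. Then every entry of exp(τA) is strictly positive. -/
/-!
Shift `τA` by a large multiple of the identity: `B = τA + c • 1` is entrywise nonnegative and
positive wherever `τA` is nonzero, and `exp (τA) = exp (-c) • exp B` since `c • 1` is central.
Each entry of `exp B = ∑ Bᵏ / k!` is a sum of nonnegative terms, and irreducibility gives, for
every pair `i, j`, some `k` with `(τA)ᵏ i j ≠ 0`, hence `Bᵏ i j > 0`.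
-/

open NormedSpace

namespace Matrix

variable {ι R : Type*} [Fintype ι] [DecidableEq ι]

theorem pow_apply_pos_of_pow_apply_ne_zero {S : Type*} [Semiring R] [Semiring S] [PartialOrder S]
    [IsStrictOrderedRing S] {C : Matrix ι ι R} {B : Matrix ι ι S} (hB : ∀ i j, 0 ≤ B i j)
    (hCB : ∀ i j, C i j ≠ 0 → 0 < B i j) (k : ℕ) :
    ∀ i j, (C ^ k) i j ≠ 0 → 0 < (B ^ k) i j := by
  induction k with
  | zero =>
    intro i j h
    obtain rfl : i = j := by by_contra hij; simp [one_apply_ne hij] at h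
    simp
  | succ k ih =>
    intro i j h
    rw [pow_succ, mul_apply] at h ⊢
    obtain ⟨m, -, hm⟩ := Finset.exists_ne_zero_of_sum_ne_zero h
    exact Finset.sum_pos' (fun l _ => mul_nonneg (pow_apply_nonneg hB k i l) (hB l j))
      ⟨m, Finset.mem_univ m, mul_pos (ih i m (left_ne_zero_of_mul hm))
        (hCB m j (right_ne_zero_of_mul hm))⟩

theorem exists_add_smul_one_nonneg_of_offDiag_nonneg [Ring R] [LinearOrder R]
    [IsStrictOrderedRing R] {M : Matrix ι ι R} (hM : ∀ i j, i ≠ j → 0 ≤ M i j) :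
    ∃ c : R, (∀ i j, 0 ≤ (M + c • 1) i j) ∧ ∀ i j, M i j ≠ 0 → 0 < (M + c • 1) i j := by
  obtain ⟨b, hb⟩ := Finite.bddAbove_range fun i => -M i i
  have hdiag : ∀ i, 0 < (M + (b + 1) • 1) i i := fun i => by
    have : 0 ≤ M i i + b := neg_le_iff_add_nonneg'.mp (hb ⟨i, rfl⟩)
    simpa [← add_assoc] using add_pos_of_nonneg_of_pos this one_pos
  refine ⟨b + 1, fun i j => ?_, fun i j hij => ?_⟩ <;> rcases eq_or_ne i j with rfl | hne
  · exact (hdiag i).le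
  · simpa [one_apply_ne hne] using hM i j hne
  · exact hdiag i
  · simpa [one_apply_ne hne] using (hM i j hne).lt_of_ne' hij

theorem exp_add_smul_one {𝔸 : Type*} [NormedCommRing 𝔸] [NormedAlgebra ℚ 𝔸] [CompleteSpace 𝔸]
    (M : Matrix ι ι 𝔸) (c : 𝔸) : exp (M + c • 1) = exp c • exp M := by
  have hexp : exp (c • 1 : Matrix ι ι 𝔸) = exp c • 1 := by
    rw [smul_one_eq_diagonal, exp_diagonal, Pi.exp_def, ← smul_one_eq_diagonal]
  rw [exp_add_of_commute _ _ ((Commute.one_right M).smul_right c), hexp, mul_smul_one]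

theorem exp_apply_pos_of_pow_apply_pos {B : Matrix ι ι ℝ} (hB : ∀ i j, 0 ≤ B i j) {k : ℕ}
    {i j : ι} (hk : 0 < (B ^ k) i j) : 0 < exp B i j := by
  let : NormedRing (Matrix ι ι ℝ) := Matrix.linftyOpNormedRing
  let : NormedAlgebra ℝ (Matrix ι ι ℝ) := Matrix.linftyOpNormedAlgebra
  have hsum : HasSum (fun m => ((m.factorial⁻¹ : ℝ) • B ^ m) i j) (exp B i j) :=
    Pi.hasSum.mp (Pi.hasSum.mp (exp_series_hasSum_exp' (𝕂 := ℝ) B) i) j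
  rw [← hsum.tsum_eq]
  exact hsum.summable.tsum_pos (fun m => mul_nonneg (by positivity) (pow_apply_nonneg hB m i j)) k
    (mul_pos (by positivity) hk)

end Matrix

theorem stmt_4 {n : ℕ} (A : Matrix (Fin n) (Fin n) ℝ) (τ : ℝ) (hτ : 0 < τ)
    (hoffdiag : ∀ i j, i ≠ j → 0 ≤ A i j)
    (hirr : ∀ i j, i ≠ j → ∃ k : ℕ, 1 ≤ k ∧ (A ^ k) i j ≠ 0) :
    ∀ i j, 0 < (NormedSpace.exp (τ • A)) i j := by
  obtain ⟨c, hB_nonneg, hB_pos⟩ := Matrix.exists_add_smul_one_nonneg_of_offDiag_nonneg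
    (M := τ • A) fun i j hij => smul_nonneg hτ.le (hoffdiag i j hij)
  have hpath : ∀ i j, ∃ k : ℕ, ((τ • A) ^ k) i j ≠ 0 := fun i j => by
    rcases eq_or_ne i j with rfl | hij
    · exact ⟨0, by simp⟩
    · obtain ⟨k, -, hk⟩ := hirr i j hij
      exact ⟨k, by simp [smul_pow, hτ.ne', hk]⟩
  intro i j
  obtain ⟨k, hk⟩ := hpath i j
  have hexp : exp (τ • A) = exp (-c) • exp (τ • A + c • 1) := by
    rw [← Matrix.exp_add_smul_one, add_assoc, ← add_smul, add_neg_cancel, zero_smul, add_zero]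
  rw [hexp, Matrix.smul_apply, ← Real.exp_eq_exp_ℝ, smul_eq_mul]
  exact mul_pos (Real.exp_pos _) (Matrix.exp_apply_pos_of_pow_apply_pos hB_nonneg
    (Matrix.pow_apply_pos_of_pow_apply_ne_zero hB_nonneg hB_pos k i j hk))
end

section
/- For every symmetric positive definite 2×2 real matrix W there exists a superbase (e₀, e₁, e₂) of ℤ² (i.e., e_i ∈ ℤ², e₀+e₁+e₂=0, |det(e₁,e₂)|=1) which is W-obtuse: ⟨e_i, W e_j⟩ ≤ 0 for all i ≠ j. -/
open Matrix

/-!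
Selling's reduction. Among all superbases of `ℤ²`, take one minimising the energy
`∑ᵢ ⟪eᵢ, W eᵢ⟫`; it exists because `W` is positive definite, so only finitely many integer
vectors have `W`-norm below any bound. If `⟪eᵢ, W eⱼ⟫ > 0` for some `i ≠ j`, then
`(-eᵢ, eⱼ, eᵢ - eⱼ)` is again a superbase, and its energy is smaller by `4 ⟪eᵢ, W eⱼ⟫`,
since `|eᵢ - eⱼ|²_W = |eᵢ + eⱼ|²_W - 4 ⟪eᵢ, W eⱼ⟫`. Hence the minimiser is `W`-obtuse.
-/

/-- Real vector associated to an integer vector in ℤ². -/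
def toReal2 (e : Fin 2 → ℤ) : Fin 2 → ℝ := fun j => (e j : ℝ)

lemma Matrix.PosDef.exists_pos_mul_norm_sq_le {n : Type*} [Fintype n] {W : Matrix n n ℝ}
    (hW : W.PosDef) : ∃ c > 0, ∀ x : n → ℝ, c * ‖x‖ ^ 2 ≤ x ⬝ᵥ W *ᵥ x := by
  rcases isEmpty_or_nonempty n with hn | hn
  · exact ⟨1, one_pos, fun x => by simp [Subsingleton.elim x 0]⟩
  obtain ⟨u, hu, hmin⟩ := (isCompact_sphere (0 : n → ℝ) 1).exists_isMinOn
    (NormedSpace.sphere_nonempty.2 zero_le_one)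
    (by fun_prop : Continuous fun x : n → ℝ => x ⬝ᵥ W *ᵥ x).continuousOn
  refine ⟨u ⬝ᵥ W *ᵥ u, hW.dotProduct_mulVec_pos (ne_zero_of_mem_unit_sphere ⟨u, hu⟩), fun x => ?_⟩
  rcases eq_or_ne x 0 with rfl | hx
  · simp
  have hx' : ‖x‖ ≠ 0 := norm_ne_zero_iff.2 hx
  have hunit : u ⬝ᵥ W *ᵥ u ≤ (‖x‖⁻¹ • x) ⬝ᵥ W *ᵥ (‖x‖⁻¹ • x) :=
    hmin (show ‖x‖⁻¹ • x ∈ Metric.sphere 0 1 by simp [norm_smul, hx'])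
  simp only [mulVec_smul, dotProduct_smul, smul_dotProduct, smul_eq_mul] at hunit
  calc u ⬝ᵥ W *ᵥ u * ‖x‖ ^ 2 ≤ ‖x‖⁻¹ * (‖x‖⁻¹ * (x ⬝ᵥ W *ᵥ x)) * ‖x‖ ^ 2 := by gcongr
    _ = x ⬝ᵥ W *ᵥ x := by field_simp

lemma Matrix.PosDef.northcott_intCast_dotProduct_mulVec {n : Type*} [Fintype n] [DecidableEq n]
    {W : Matrix n n ℝ} (hW : W.PosDef) :
    Northcott fun v : n → ℤ => (fun i => (v i : ℝ)) ⬝ᵥ W *ᵥ (fun i => (v i : ℝ)) where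
  finite_le C := by
    obtain ⟨c, hc, hcW⟩ := hW.exists_pos_mul_norm_sq_le
    refine (Set.finite_Icc (-fun _ => ⌈C / c⌉) fun _ => ⌈C / c⌉).subset fun v hv => ?_
    have hbound (i : n) : |v i| ≤ ⌈C / c⌉ := by
      have hsq : (v i : ℝ) ^ 2 ≤ C / c := by
        rw [le_div_iff₀ hc, mul_comm]
        have hi : ‖(v i : ℝ)‖ ^ 2 ≤ ‖fun i => (v i : ℝ)‖ ^ 2 := by
          gcongr; exact norm_le_pi_norm (fun i => (v i : ℝ)) i
        rw [Real.norm_eq_abs, sq_abs] at hi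
        exact (mul_le_mul_of_nonneg_left hi hc.le).trans ((hcW _).trans hv)
      have : (|v i| : ℝ) ≤ ⌈C / c⌉ := by
        calc (|v i| : ℝ) ≤ (v i : ℝ) ^ 2 := by
              rw [← sq_abs]; exact_mod_cast Int.le_self_sq |v i|
          _ ≤ ⌈C / c⌉ := hsq.trans (Int.le_ceil _)
      exact_mod_cast this
    exact ⟨fun i => neg_le_of_abs_le (hbound i), fun i => le_of_abs_le (hbound i)⟩

section SuperbaseEnergy

variable {V : Type*} [AddCommGroup V] [Module ℝ V] (B : LinearMap.BilinForm ℝ V)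

/-- The energy `B e₀ e₀ + B e₁ e₁ + B e₂ e₂` of the superbase `(e₀, e₁, e₂) = (-(a + b), a, b)`. -/
def superbaseEnergy (a b : V) : ℝ := B a a + B b b + B (a + b) (a + b)

lemma superbaseEnergy_neg_left (hB : B.IsSymm) (a b : V) :
    superbaseEnergy B (-a) b = superbaseEnergy B a b - 4 * B a b := by
  simp only [superbaseEnergy, map_add, map_neg, LinearMap.add_apply, LinearMap.neg_apply,
    hB.eq b a]
  ring

lemma superbaseEnergy_neg_add_left (a b : V) :
    superbaseEnergy B (-(a + b)) a = superbaseEnergy B a b := by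
  simp only [superbaseEnergy, neg_add_rev, neg_add_cancel_right, map_add, map_neg,
    LinearMap.add_apply, LinearMap.neg_apply]
  ring

lemma superbaseEnergy_neg_add_right (a b : V) :
    superbaseEnergy B (-(a + b)) b = superbaseEnergy B a b := by
  simp only [superbaseEnergy, neg_add_rev, map_add, map_neg,
    LinearMap.add_apply, LinearMap.neg_apply]
  ring

lemma apply_self_le_superbaseEnergy (hB : ∀ x, 0 ≤ B x x) (a b : V) :
    B a a ≤ superbaseEnergy B a b ∧ B b b ≤ superbaseEnergy B a b := by
  unfold superbaseEnergy
  constructor <;> linarith [hB a, hB b, hB (a + b)]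

end SuperbaseEnergy

lemma toReal2_add (a b : Fin 2 → ℤ) : toReal2 (a + b) = toReal2 a + toReal2 b := by
  ext; simp [toReal2]

lemma toReal2_neg (a : Fin 2 → ℤ) : toReal2 (-a) = -toReal2 a := by
  ext; simp [toReal2]

def unimodularPairs : Set ((Fin 2 → ℤ) × (Fin 2 → ℤ)) :=
  {p | |p.1 0 * p.2 1 - p.1 1 * p.2 0| = 1}

lemma neg_fst_mem_unimodularPairs {a b : Fin 2 → ℤ} (h : (a, b) ∈ unimodularPairs) :
    (-a, b) ∈ unimodularPairs := by
  simp only [unimodularPairs, Set.mem_ofPred_eq, Pi.neg_apply] at h ⊢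
  rw [← h, ← abs_neg]; ring_nf

lemma neg_add_left_mem_unimodularPairs {a b : Fin 2 → ℤ} (h : (a, b) ∈ unimodularPairs) :
    (-(a + b), a) ∈ unimodularPairs := by
  simp only [unimodularPairs, Set.mem_ofPred_eq, Pi.neg_apply, Pi.add_apply] at h ⊢
  rw [← h]; ring_nf

lemma neg_add_right_mem_unimodularPairs {a b : Fin 2 → ℤ} (h : (a, b) ∈ unimodularPairs) :
    (-(a + b), b) ∈ unimodularPairs := by
  simp only [unimodularPairs, Set.mem_ofPred_eq, Pi.neg_apply, Pi.add_apply] at h ⊢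
  rw [← h, ← abs_neg]; ring_nf

noncomputable def pairEnergy (W : Matrix (Fin 2) (Fin 2) ℝ)
    (p : (Fin 2 → ℤ) × (Fin 2 → ℤ)) : ℝ :=
  superbaseEnergy (toBilin' W) (toReal2 p.1) (toReal2 p.2)

lemma northcott_pairEnergy {W : Matrix (Fin 2) (Fin 2) ℝ} (hW : W.PosDef) :
    Northcott (pairEnergy W) where
  finite_le C := by
    have hQ := hW.northcott_intCast_dotProduct_mulVec.finite_le C
    refine (hQ.prod hQ).subset fun p hp => ?_
    have hle := apply_self_le_superbaseEnergy (toBilin' W)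
      (fun x => by simpa [toBilin'_apply'] using hW.posSemidef.dotProduct_mulVec_nonneg x)
      (toReal2 p.1) (toReal2 p.2)
    simp only [toBilin'_apply'] at hle
    exact ⟨hle.1.trans hp, hle.2.trans hp⟩

lemma toBilin'_nonpos_of_isMinOn_pairEnergy {W : Matrix (Fin 2) (Fin 2) ℝ} (hW : W.IsSymm)
    {p : (Fin 2 → ℤ) × (Fin 2 → ℤ)} (hp : p ∈ unimodularPairs)
    (hmin : IsMinOn (pairEnergy W) unimodularPairs p) :
    toBilin' W (toReal2 p.1) (toReal2 p.2) ≤ 0 := by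
  have hflip := hmin (neg_fst_mem_unimodularPairs hp)
  simp only [Set.mem_ofPred_eq, pairEnergy, toReal2_neg,
    superbaseEnergy_neg_left _ (isSymm_toBilin'_iff_isSymm.2 hW)] at hflip
  linarith

theorem stmt_12_general (W : Matrix (Fin 2) (Fin 2) ℝ) (hWpd : W.PosDef) :
    ∃ e₀ e₁ e₂ : Fin 2 → ℤ,
      e₀ + e₁ + e₂ = 0 ∧
      |e₁ 0 * e₂ 1 - e₁ 1 * e₂ 0| = 1 ∧
      toReal2 e₀ ⬝ᵥ W.mulVec (toReal2 e₁) ≤ 0 ∧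
      toReal2 e₀ ⬝ᵥ W.mulVec (toReal2 e₂) ≤ 0 ∧
      toReal2 e₁ ⬝ᵥ W.mulVec (toReal2 e₂) ≤ 0 := by
  have hW : W.IsSymm := isHermitian_iff_isSymm.1 hWpd.isHermitian
  have := northcott_pairEnergy hWpd
  have hstd : (![1, 0], ![0, 1]) ∈ unimodularPairs := by simp [unimodularPairs]
  obtain ⟨⟨a, b⟩, hab, hmin⟩ := Northcott.exists_min_image (pairEnergy W) _ ⟨_, hstd⟩
  have hnonpos {q} (hq : q ∈ unimodularPairs) (hE : pairEnergy W q = pairEnergy W (a, b)) :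
      toReal2 q.1 ⬝ᵥ W *ᵥ toReal2 q.2 ≤ 0 := by
    rw [← toBilin'_apply']
    exact toBilin'_nonpos_of_isMinOn_pairEnergy hW hq fun r hr => hE ▸ hmin r hr
  refine ⟨-(a + b), a, b, by abel, hab, ?_, ?_, hnonpos hab rfl⟩
  · refine hnonpos (neg_add_left_mem_unimodularPairs hab) ?_
    simp only [pairEnergy, toReal2_neg, toReal2_add, superbaseEnergy_neg_add_left]
  · refine hnonpos (neg_add_right_mem_unimodularPairs hab) ?_
    simp only [pairEnergy, toReal2_neg, toReal2_add, superbaseEnergy_neg_add_right]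

theorem stmt_12 (W : Matrix (Fin 2) (Fin 2) ℝ) (hW : W.IsSymm) (hWpd : W.PosDef) :
    ∃ e₀ e₁ e₂ : Fin 2 → ℤ,
      e₀ + e₁ + e₂ = 0 ∧
      |e₁ 0 * e₂ 1 - e₁ 1 * e₂ 0| = 1 ∧
      toReal2 e₀ ⬝ᵥ W.mulVec (toReal2 e₁) ≤ 0 ∧
      toReal2 e₀ ⬝ᵥ W.mulVec (toReal2 e₂) ≤ 0 ∧
      toReal2 e₁ ⬝ᵥ W.mulVec (toReal2 e₂) ≤ 0 :=
  stmt_12_general W hWpd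
end
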